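/- arXiv:2104.13886 — 7 statements merged into one kernel-verified Lean document; each statement's English description precedes it below -/
import Mathlib

section
/- Let M and N be symmetric positive semidefinite n×n real matrices with M positive definite, and let μ, τ, λ > 0 be real parameters. Define S̃ = (1/λ) M + M (τ M + 2μ N)⁻¹ N. Then S̃ is invertible and S̃⁻¹ = (2μλ/(2μ+λ)) M⁻¹ + τ (λ/(2μ+λ))² (τ/(2μ+λ) M + N)⁻¹. -/
open Matrix

/-!
Put `A = τ M + 2μ N`, `B = τ/(2μ+λ) M + N` and `c = (2μ+λ)/λ`; both `A` and `B` are positive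
definite. The two identities `A/λ + N = c B` and `A = 2μ B + (τλ/(2μ+λ)) M` carry the proof:
the first factors `S̃ = M A⁻¹ (A/λ + N) = c M A⁻¹ B`, so `S̃⁻¹ = c⁻¹ B⁻¹ A M⁻¹`, and the second
splits `B⁻¹ A M⁻¹` into `2μ M⁻¹ + (τλ/(2μ+λ)) B⁻¹`.
-/

namespace Matrix

variable {n K : Type*} [Fintype n] [DecidableEq n] [Field K]

theorem smul_add_mul_inv_mul_eq_smul {M A B N : Matrix n n K} {s t : K} (hA : IsUnit A.det)
    (h : s • A + N = t • B) : s • M + M * A⁻¹ * N = t • (M * A⁻¹ * B) := by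
  rw [← Matrix.mul_smul, ← h, Matrix.mul_add, Matrix.mul_smul, nonsing_inv_mul_cancel_right A M hA]

theorem inv_mul_inv_mul_eq_smul_add_smul {M A B : Matrix n n K} {a b : K} (hM : IsUnit M.det)
    (hA : IsUnit A.det) (hB : IsUnit B.det) (h : A = a • B + b • M) :
    (M * A⁻¹ * B)⁻¹ = a • M⁻¹ + b • B⁻¹ := by
  rw [Matrix.mul_inv_rev, Matrix.mul_inv_rev, nonsing_inv_nonsing_inv A hA, h]
  simp only [Matrix.add_mul, Matrix.mul_add, Matrix.smul_mul, Matrix.mul_smul, ← Matrix.mul_assoc,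
    nonsing_inv_mul B hB, mul_nonsing_inv_cancel_right M _ hM, Matrix.one_mul]

theorem inv_smul_of_ne_zero {A : Matrix n n K} {t : K} (ht : t ≠ 0) (hA : IsUnit A.det) :
    (t • A)⁻¹ = t⁻¹ • A⁻¹ := by
  let _ := invertibleOfNonzero ht
  rw [inv_smul A t hA, invOf_eq_inv]

theorem isUnit_det_mul_inv_mul {M A B : Matrix n n K} (hM : IsUnit M.det) (hA : IsUnit A.det)
    (hB : IsUnit B.det) : IsUnit (M * A⁻¹ * B).det := by
  rw [det_mul, det_mul, det_nonsing_inv]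
  exact (hM.mul (isUnit_ringInverse.mpr hA)).mul hB

end Matrix

/-- Exact inverse of the Schur complement preconditioner `S̃` (Theorem 3.10):
for `M` SPD, `N` symmetric PSD and `μ, τ, λ > 0`,
`S̃ = (1/λ) M + M (τ M + 2μ N)⁻¹ N` is invertible with
`S̃⁻¹ = (2μλ/(2μ+λ)) M⁻¹ + τ (λ/(2μ+λ))² ((τ/(2μ+λ)) M + N)⁻¹`. -/
theorem schur_preconditioner_exact_inverse {n : Type*} [Fintype n] [DecidableEq n]
    (M N : Matrix n n ℝ) (hM : M.PosDef) (hN : N.PosSemidef)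
    (μ τ lam : ℝ) (hμ : 0 < μ) (hτ : 0 < τ) (hlam : 0 < lam) :
    IsUnit ((1 / lam) • M + M * (τ • M + (2 * μ) • N)⁻¹ * N).det ∧
      ((1 / lam) • M + M * (τ • M + (2 * μ) • N)⁻¹ * N)⁻¹ =
        (2 * μ * lam / (2 * μ + lam)) • M⁻¹ +
          (τ * (lam / (2 * μ + lam)) ^ 2) • ((τ / (2 * μ + lam)) • M + N)⁻¹ := by
  have hc : 0 < 2 * μ + lam := by linarith
  set A := τ • M + (2 * μ) • N
  set B := (τ / (2 * μ + lam)) • M + N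
  have hMdet : IsUnit M.det := hM.det_pos.ne'.isUnit
  have hAdet : IsUnit A.det :=
    ((hM.smul hτ).add_posSemidef (hN.smul (by positivity))).det_pos.ne'.isUnit
  have hBdet : IsUnit B.det :=
    ((hM.smul (by positivity)).add_posSemidef hN).det_pos.ne'.isUnit
  have hfactor : (1 / lam) • M + M * A⁻¹ * N = ((2 * μ + lam) / lam) • (M * A⁻¹ * B) :=
    smul_add_mul_inv_mul_eq_smul hAdet (by match_scalars <;> field_simp)
  have hsplit : (M * A⁻¹ * B)⁻¹ = (2 * μ) • M⁻¹ + (τ * lam / (2 * μ + lam)) • B⁻¹ :=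
    inv_mul_inv_mul_eq_smul_add_smul hMdet hAdet hBdet (by match_scalars <;> field_simp)
  have ht : (2 * μ + lam) / lam ≠ 0 := by positivity
  have hdet := isUnit_det_mul_inv_mul hMdet hAdet hBdet
  rw [hfactor, det_smul]
  refine ⟨(ht.isUnit.pow _).mul hdet, ?_⟩
  rw [inv_smul_of_ne_zero ht hdet, hsplit]
  match_scalars <;> field_simp
end

section
/- Let A be a symmetric positive definite n×n real matrix and B an n×m real matrix. Then for every vector P ∈ ℝᵐ, ⟨Bᵀ A⁻¹ B P, P⟩ = sup over nonzero V ∈ ℝⁿ of ⟨B P, V⟩² / ⟨A V, V⟩. -/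
/-!
Put `x = A⁻¹ (B P)`, so that `⟨Bᵀ A⁻¹ B P, P⟩ = ⟨A x, x⟩` and `⟨B P, V⟩ = ⟨A x, V⟩`.
Cauchy–Schwarz for the inner product `⟨A ·, ·⟩` bounds every quotient by `⟨A x, x⟩`,
and `V = x` attains it. When `B P = 0` every quotient is `0`, and so is the supremum
(also of the empty set, by the convention `sSup ∅ = 0`).
-/

open Matrix

namespace Matrix

variable {n m : Type*} [Fintype n] [Fintype m]

theorem transpose_mul_mul_mulVec_dotProduct {R : Type*} [CommSemiring R]
    (M : Matrix n n R) (B : Matrix n m R) (P : m → R) :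
    (Bᵀ * M * B) *ᵥ P ⬝ᵥ P = M *ᵥ (B *ᵥ P) ⬝ᵥ B *ᵥ P := by
  rw [← mulVec_mulVec, ← mulVec_mulVec, mulVec_transpose, ← dotProduct_mulVec]

theorem PosSemidef.dotProduct_mulVec_mul_le {R : Type*} [CommRing R] [LinearOrder R]
    [IsStrictOrderedRing R] [StarRing R] [TrivialStar R] {A : Matrix n n R}
    (hA : A.PosSemidef) (x y : n → R) :
    (x ⬝ᵥ A *ᵥ y) * (y ⬝ᵥ A *ᵥ x) ≤ (x ⬝ᵥ A *ᵥ x) * (y ⬝ᵥ A *ᵥ y) := by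
  classical
  have hnonneg (z : n → R) : 0 ≤ toLinearMap₂' R A z z := by
    simpa only [toLinearMap₂'_apply', star_trivial] using hA.dotProduct_mulVec_nonneg z
  simpa only [toLinearMap₂'_apply'] using
    LinearMap.BilinForm.apply_mul_apply_le_of_forall_zero_le _ hnonneg x y

theorem mulVec_nonsing_inv_mulVec [DecidableEq n] {R : Type*} [CommRing R] {A : Matrix n n R}
    (hA : IsUnit A.det) (v : n → R) : A *ᵥ (A⁻¹ *ᵥ v) = v := by
  rw [mulVec_mulVec, mul_nonsing_inv A hA, one_mulVec]

variable [DecidableEq n]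

section LinearOrderedField

variable {K : Type*} [Field K] [LinearOrder K] [IsStrictOrderedRing K]
  [StarRing K] [TrivialStar K] {A : Matrix n n K}

theorem PosDef.sq_dotProduct_le (hA : A.PosDef) (Q V : n → K) :
    (Q ⬝ᵥ V) ^ 2 ≤ (A⁻¹ *ᵥ Q ⬝ᵥ Q) * (A *ᵥ V ⬝ᵥ V) := by
  set x := A⁻¹ *ᵥ Q
  have hAx : A *ᵥ x = Q := mulVec_nonsing_inv_mulVec ((isUnit_iff_isUnit_det A).mp hA.isUnit) Q
  have hAt : Aᵀ = A := by rw [← conjTranspose_eq_transpose_of_trivial, hA.isHermitian.eq]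
  have hxV : x ⬝ᵥ A *ᵥ V = Q ⬝ᵥ V := by
    rw [dotProduct_mulVec, ← mulVec_transpose, hAt, hAx]
  have cs := hA.posSemidef.dotProduct_mulVec_mul_le x V
  rwa [hxV, hAx, dotProduct_comm V Q, ← sq, dotProduct_comm V (A *ᵥ V)] at cs

end LinearOrderedField

theorem PosDef.sSup_sq_dotProduct_div_eq {A : Matrix n n ℝ} (hA : A.PosDef) (Q : n → ℝ) :
    sSup {r : ℝ | ∃ V : n → ℝ, V ≠ 0 ∧ r = (Q ⬝ᵥ V) ^ 2 / (A *ᵥ V ⬝ᵥ V)} =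
      A⁻¹ *ᵥ Q ⬝ᵥ Q := by
  by_cases hQ : Q = 0
  · subst hQ
    simp only [zero_dotProduct, ne_eq, OfNat.ofNat_ne_zero, not_false_eq_true, zero_pow,
      zero_div, mulVec_zero, dotProduct_zero]
    exact le_antisymm (Real.sSup_nonpos fun r ⟨_, _, hr⟩ ↦ hr.le)
      (Real.sSup_nonneg fun r ⟨_, _, hr⟩ ↦ hr.ge)
  set x := A⁻¹ *ᵥ Q
  have hAx : A *ᵥ x = Q := mulVec_nonsing_inv_mulVec ((isUnit_iff_isUnit_det A).mp hA.isUnit) Q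
  refine IsGreatest.csSup_eq ⟨⟨x, fun hx ↦ hQ ?_, ?_⟩, ?_⟩
  · rw [← hAx, hx, mulVec_zero]
  · rw [hAx, dotProduct_comm Q x, sq, mul_self_div_self]
  · rintro r ⟨V, hV, rfl⟩
    have hpos : 0 < A *ᵥ V ⬝ᵥ V := by
      simpa only [dotProduct_comm, star_trivial] using hA.dotProduct_mulVec_pos hV
    rw [div_le_iff₀ hpos]
    exact hA.sq_dotProduct_le Q V

end Matrix

theorem schur_quadratic_form_sup_general {n m : Type*} [Fintype n] [Fintype m]
    [DecidableEq n]
    (A : Matrix n n ℝ) (hA : A.PosDef) (B : Matrix n m ℝ) (P : m → ℝ) :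
    (Bᵀ * A⁻¹ * B).mulVec P ⬝ᵥ P =
      sSup {r : ℝ | ∃ V : n → ℝ, V ≠ 0 ∧
        r = (B.mulVec P ⬝ᵥ V) ^ 2 / (A.mulVec V ⬝ᵥ V)} := by
  rw [transpose_mul_mul_mulVec_dotProduct, hA.sSup_sq_dotProduct_div_eq]

/-- Variational characterization of the quadratic form of `Bᵀ A⁻¹ B` (Lemma 3.6):
`⟨Bᵀ A⁻¹ B P, P⟩ = sup_{V ≠ 0} ⟨B P, V⟩² / ⟨A V, V⟩`. -/
theorem schur_quadratic_form_sup {n m : Type*} [Fintype n] [Fintype m]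
    [DecidableEq n] [Nonempty n]
    (A : Matrix n n ℝ) (hA : A.PosDef) (B : Matrix n m ℝ) (P : m → ℝ) :
    (Bᵀ * A⁻¹ * B).mulVec P ⬝ᵥ P =
      sSup {r : ℝ | ∃ V : n → ℝ, V ≠ 0 ∧
        r = (B.mulVec P ⬝ᵥ V) ^ 2 / (A.mulVec V ⬝ᵥ V)} :=
  schur_quadratic_form_sup_general A hA B P
end

section
/- Let X₁, X₂ and Y₁, Y₂ be pairs of compatible normed vector spaces and let T be a linear map bounded both as a map X₁ → Y₁ with norm M₁ and as a map X₂ → Y₂ with norm M₂. Then T maps X₁ + X₂ into Y₁ + Y₂ and its operator norm with respect to the sum norms ‖z‖²_{X+Y} = inf_{z=x+y}(‖x‖² + ‖y‖²) satisfies ‖T‖_{X₁+X₂ → Y₁+Y₂} ≤ (M₁² + M₂²)^{1/2}. -/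
/-!
Splitting `z = i₁ x + i₂ y` and bounding the two pieces separately gives the decomposition
`T z = j₁ u + j₂ v` with `‖u‖² + ‖v‖² ≤ M₁²‖x‖² + M₂²‖y‖² ≤ (M₁² + M₂²)(‖x‖² + ‖y‖²)`.
Taking the infimum over all decompositions of `z` bounds the squared sum norm of `T z` by
`(M₁² + M₂²)` times the squared sum norm of `z`.
-/

section SumNormSq

variable {X₁ X₂ Z : Type*} [SeminormedAddGroup X₁] [SeminormedAddGroup X₂] [Add Z]

/-- Since `sInf ∅ = 0`, this is `0` when `z` has no decomposition `z = i₁ x + i₂ y`. -/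
noncomputable def sumNormSq (i₁ : X₁ → Z) (i₂ : X₂ → Z) (z : Z) : ℝ :=
  sInf {r : ℝ | ∃ x : X₁, ∃ y : X₂, z = i₁ x + i₂ y ∧ r = ‖x‖ ^ 2 + ‖y‖ ^ 2}

variable {i₁ : X₁ → Z} {i₂ : X₂ → Z} {z : Z}

theorem sumNormSq_le {x : X₁} {y : X₂}
    (h : z = i₁ x + i₂ y) : sumNormSq i₁ i₂ z ≤ ‖x‖ ^ 2 + ‖y‖ ^ 2 := by
  refine csInf_le ⟨0, ?_⟩ ⟨x, y, h, rfl⟩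
  rintro _ ⟨x, y, -, rfl⟩
  positivity

theorem le_mul_sumNormSq {a k : ℝ} (hk : 0 ≤ k)
    (hz : ∃ x y, z = i₁ x + i₂ y)
    (h : ∀ x y, z = i₁ x + i₂ y → a ≤ k * (‖x‖ ^ 2 + ‖y‖ ^ 2)) :
    a ≤ k * sumNormSq i₁ i₂ z := by
  obtain ⟨x₀, y₀, hz⟩ := hz
  rw [sumNormSq, ← smul_eq_mul, ← Real.sInf_smul_of_nonneg hk]
  refine le_csInf ⟨_, Set.smul_mem_smul_set ⟨x₀, y₀, hz, rfl⟩⟩ ?_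
  rintro _ ⟨_, ⟨x, y, hxy, rfl⟩, rfl⟩
  exact h x y hxy

end SumNormSq

theorem exists_map_decomp_sq_norm_le {X₁ X₂ Y₁ Y₂ Z W : Type*}
    [Norm X₁] [Norm X₂] [SeminormedAddGroup Y₁] [SeminormedAddGroup Y₂]
    [AddCommGroup Z] [Module ℝ Z] [AddCommGroup W] [Module ℝ W]
    {i₁ : X₁ → Z} {i₂ : X₂ → Z} {j₁ : Y₁ → W} {j₂ : Y₂ → W} {T : Z →ₗ[ℝ] W} {M₁ M₂ : ℝ}
    (h₁ : ∀ x : X₁, ∃ y : Y₁, T (i₁ x) = j₁ y ∧ ‖y‖ ≤ M₁ * ‖x‖)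
    (h₂ : ∀ x : X₂, ∃ y : Y₂, T (i₂ x) = j₂ y ∧ ‖y‖ ≤ M₂ * ‖x‖) (x : X₁) (y : X₂) :
    ∃ u v, T (i₁ x + i₂ y) = j₁ u + j₂ v ∧
      ‖u‖ ^ 2 + ‖v‖ ^ 2 ≤ (M₁ ^ 2 + M₂ ^ 2) * (‖x‖ ^ 2 + ‖y‖ ^ 2) := by
  obtain ⟨u, hTu, hu⟩ := h₁ x
  obtain ⟨v, hTv, hv⟩ := h₂ y
  refine ⟨u, v, by rw [map_add, hTu, hTv], ?_⟩
  have hu' : ‖u‖ ^ 2 ≤ M₁ ^ 2 * ‖x‖ ^ 2 := by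
    rw [← mul_pow]; exact pow_le_pow_left₀ (norm_nonneg u) hu 2
  have hv' : ‖v‖ ^ 2 ≤ M₂ ^ 2 * ‖y‖ ^ 2 := by
    rw [← mul_pow]; exact pow_le_pow_left₀ (norm_nonneg v) hv 2
  nlinarith [sq_nonneg M₁, sq_nonneg M₂, sq_nonneg ‖x‖, sq_nonneg ‖y‖]

theorem map_bounded_on_sum_space_general
    {X₁ X₂ Y₁ Y₂ Z W : Type*}
    [NormedAddCommGroup X₁] [NormedSpace ℝ X₁]
    [NormedAddCommGroup X₂] [NormedSpace ℝ X₂]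
    [NormedAddCommGroup Y₁] [NormedSpace ℝ Y₁]
    [NormedAddCommGroup Y₂] [NormedSpace ℝ Y₂]
    [AddCommGroup Z] [Module ℝ Z] [AddCommGroup W] [Module ℝ W]
    (i₁ : X₁ →ₗ[ℝ] Z) (i₂ : X₂ →ₗ[ℝ] Z) (j₁ : Y₁ →ₗ[ℝ] W) (j₂ : Y₂ →ₗ[ℝ] W)
    (T : Z →ₗ[ℝ] W) (M₁ M₂ : ℝ)
    (h₁ : ∀ x : X₁, ∃ y : Y₁, T (i₁ x) = j₁ y ∧ ‖y‖ ≤ M₁ * ‖x‖)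
    (h₂ : ∀ x : X₂, ∃ y : Y₂, T (i₂ x) = j₂ y ∧ ‖y‖ ≤ M₂ * ‖x‖) :
    let fX : Z → ℝ := fun z =>
      Real.sqrt (sInf {r : ℝ | ∃ x : X₁, ∃ y : X₂, z = i₁ x + i₂ y ∧ r = ‖x‖ ^ 2 + ‖y‖ ^ 2})
    let fY : W → ℝ := fun w =>
      Real.sqrt (sInf {r : ℝ | ∃ x : Y₁, ∃ y : Y₂, w = j₁ x + j₂ y ∧ r = ‖x‖ ^ 2 + ‖y‖ ^ 2})
    ∀ z ∈ LinearMap.range i₁ ⊔ LinearMap.range i₂,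
      T z ∈ LinearMap.range j₁ ⊔ LinearMap.range j₂ ∧
        fY (T z) ≤ Real.sqrt (M₁ ^ 2 + M₂ ^ 2) * fX z := by
  intro fX fY z hz
  obtain ⟨_, ⟨x₀, rfl⟩, _, ⟨y₀, rfl⟩, rfl⟩ := Submodule.mem_sup.mp hz
  refine ⟨?_, ?_⟩
  · obtain ⟨u, v, hTz, -⟩ := exists_map_decomp_sq_norm_le h₁ h₂ x₀ y₀
    exact Submodule.mem_sup.mpr ⟨j₁ u, ⟨u, rfl⟩, j₂ v, ⟨v, rfl⟩, hTz.symm⟩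
  · have hsq : sumNormSq j₁ j₂ (T (i₁ x₀ + i₂ y₀)) ≤
        (M₁ ^ 2 + M₂ ^ 2) * sumNormSq i₁ i₂ (i₁ x₀ + i₂ y₀) := by
      refine le_mul_sumNormSq (by positivity) ⟨x₀, y₀, rfl⟩ fun x y hxy => ?_
      obtain ⟨u, v, hTz, huv⟩ := exists_map_decomp_sq_norm_le h₁ h₂ x y
      exact (sumNormSq_le (hxy ▸ hTz)).trans huv
    calc fY (T (i₁ x₀ + i₂ y₀)) ≤ √((M₁ ^ 2 + M₂ ^ 2) * sumNormSq i₁ i₂ (i₁ x₀ + i₂ y₀)) :=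
          Real.sqrt_le_sqrt hsq
      _ = √(M₁ ^ 2 + M₂ ^ 2) * fX (i₁ x₀ + i₂ y₀) := Real.sqrt_mul (by positivity) _

/-- Lemma 2.2 (boundedness on sum spaces): if the linear map `T` (defined on the
ambient space) restricts to a bounded map `X₁ → Y₁` with constant `M₁` and to a
bounded map `X₂ → Y₂` with constant `M₂`, then `T` maps `X₁ + X₂` into `Y₁ + Y₂`
and `‖T z‖_{Y₁+Y₂} ≤ √(M₁² + M₂²) ‖z‖_{X₁+X₂}` in the sum norms
`‖z‖² = inf_{z = x + y} (‖x‖² + ‖y‖²)`. -/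
theorem map_bounded_on_sum_space
    {X₁ X₂ Y₁ Y₂ Z W : Type*}
    [NormedAddCommGroup X₁] [NormedSpace ℝ X₁]
    [NormedAddCommGroup X₂] [NormedSpace ℝ X₂]
    [NormedAddCommGroup Y₁] [NormedSpace ℝ Y₁]
    [NormedAddCommGroup Y₂] [NormedSpace ℝ Y₂]
    [AddCommGroup Z] [Module ℝ Z] [AddCommGroup W] [Module ℝ W]
    (i₁ : X₁ →ₗ[ℝ] Z) (i₂ : X₂ →ₗ[ℝ] Z) (j₁ : Y₁ →ₗ[ℝ] W) (j₂ : Y₂ →ₗ[ℝ] W)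
    (T : Z →ₗ[ℝ] W) (M₁ M₂ : ℝ) (hM₁ : 0 ≤ M₁) (hM₂ : 0 ≤ M₂)
    (h₁ : ∀ x : X₁, ∃ y : Y₁, T (i₁ x) = j₁ y ∧ ‖y‖ ≤ M₁ * ‖x‖)
    (h₂ : ∀ x : X₂, ∃ y : Y₂, T (i₂ x) = j₂ y ∧ ‖y‖ ≤ M₂ * ‖x‖) :
    let fX : Z → ℝ := fun z =>
      Real.sqrt (sInf {r : ℝ | ∃ x : X₁, ∃ y : X₂, z = i₁ x + i₂ y ∧ r = ‖x‖ ^ 2 + ‖y‖ ^ 2})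
    let fY : W → ℝ := fun w =>
      Real.sqrt (sInf {r : ℝ | ∃ x : Y₁, ∃ y : Y₂, w = j₁ x + j₂ y ∧ r = ‖x‖ ^ 2 + ‖y‖ ^ 2})
    ∀ z ∈ LinearMap.range i₁ ⊔ LinearMap.range i₂,
      T z ∈ LinearMap.range j₁ ⊔ LinearMap.range j₂ ∧
        fY (T z) ≤ Real.sqrt (M₁ ^ 2 + M₂ ^ 2) * fX z :=
  map_bounded_on_sum_space_general i₁ i₂ j₁ j₂ T M₁ M₂ h₁ h₂
end

section
/- Let X and Y be Hilbert spaces compatibly embedded in a common Hilbert space, with X ∩ Y dense in both X and Y. Then for every bounded linear functional g on X ∩ Y (equipped with norm ‖z‖² = ‖z‖²_X + ‖z‖²_Y), the dual norm satisfies ‖g‖_{(X∩Y)'} = ‖g‖_{X' + Y'}, where X' + Y' carries the sum norm ‖g‖² = inf_{g = g₁ + g₂}(‖g₁‖²_{X'} + ‖g₂‖²_{Y'}). -/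
/-! Every splitting `g = g₁ ∘ fst + g₂ ∘ snd` bounds `‖g‖` by `√(‖g₁‖² + ‖g₂‖²)`, by Cauchy–Schwarz
in `ℝ²`. Conversely, extend `g` by Hahn–Banach to all of `X × Y` without increasing its norm and
represent the extension by a vector `v = (v₁, v₂)` (Riesz); then `g₁ = ⟪v₁, ·⟫` and `g₂ = ⟪v₂, ·⟫`
attain the bound, since `‖v‖² = ‖v₁‖² + ‖v₂‖²`. -/

open WithLp

theorem mul_add_mul_le_sqrt_mul_sqrt (a b c d : ℝ) :
    a * b + c * d ≤ √(a ^ 2 + c ^ 2) * √(b ^ 2 + d ^ 2) := by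
  rw [← Real.sqrt_mul (by positivity)]
  apply Real.le_sqrt_of_sq_le
  nlinarith [sq_nonneg (a * d - c * b)]

section Splitting

variable {X Y : Type*}

theorem ContinuousLinearMap.norm_le_sqrt_of_apply_eq_add
    [SeminormedAddCommGroup X] [NormedSpace ℝ X] [SeminormedAddCommGroup Y] [NormedSpace ℝ Y]
    {E : Submodule ℝ (WithLp 2 (X × Y))} {g : E →L[ℝ] ℝ} {g₁ : X →L[ℝ] ℝ} {g₂ : Y →L[ℝ] ℝ}
    (hg : ∀ p : E, g p = g₁ (WithLp.equiv 2 (X × Y) p.val).1 + g₂ (WithLp.equiv 2 (X × Y) p.val).2) :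
    ‖g‖ ≤ √(‖g₁‖ ^ 2 + ‖g₂‖ ^ 2) := by
  refine g.opNorm_le_bound (Real.sqrt_nonneg _) fun p => ?_
  have hp : ‖p‖ = √(‖p.val.fst‖ ^ 2 + ‖p.val.snd‖ ^ 2) := prod_norm_eq_of_L2 p.val
  calc ‖g p‖ ≤ ‖g₁‖ * ‖p.val.fst‖ + ‖g₂‖ * ‖p.val.snd‖ := by
        rw [hg p]
        exact (norm_add_le _ _).trans (add_le_add (g₁.le_opNorm _) (g₂.le_opNorm _))
    _ ≤ √(‖g₁‖ ^ 2 + ‖g₂‖ ^ 2) * ‖p‖ := hp ▸ mul_add_mul_le_sqrt_mul_sqrt _ _ _ _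

variable [NormedAddCommGroup X] [InnerProductSpace ℝ X] [CompleteSpace X]
  [NormedAddCommGroup Y] [InnerProductSpace ℝ Y] [CompleteSpace Y]

theorem exists_apply_eq_add_sqrt_eq_norm (E : Submodule ℝ (WithLp 2 (X × Y))) (g : E →L[ℝ] ℝ) :
    ∃ (g₁ : X →L[ℝ] ℝ) (g₂ : Y →L[ℝ] ℝ),
      (∀ p : E, g p = g₁ (WithLp.equiv 2 (X × Y) p.val).1 + g₂ (WithLp.equiv 2 (X × Y) p.val).2) ∧
      √(‖g₁‖ ^ 2 + ‖g₂‖ ^ 2) = ‖g‖ := by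
  obtain ⟨G, hGg, hGnorm⟩ := exists_extension_norm_eq E g
  set v := (InnerProductSpace.toDual ℝ (WithLp 2 (X × Y))).symm G
  refine ⟨innerSL ℝ v.fst, innerSL ℝ v.snd, fun p => ?_, ?_⟩
  · rw [← hGg p, ← InnerProductSpace.toDual_symm_apply, prod_inner_apply]
    rfl
  · rw [innerSL_apply_norm, innerSL_apply_norm, ← prod_norm_sq_eq_of_L2,
      Real.sqrt_sq (norm_nonneg _), LinearIsometryEquiv.norm_map, hGnorm]

end Splitting

theorem dual_norm_intersection_eq_sum_dual_general
    {X Y : Type*}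
    [NormedAddCommGroup X] [InnerProductSpace ℝ X] [CompleteSpace X]
    [NormedAddCommGroup Y] [InnerProductSpace ℝ Y] [CompleteSpace Y]
    (E : Submodule ℝ (WithLp 2 (X × Y)))
    (g : E →L[ℝ] ℝ) :
    ‖g‖ = sInf {r : ℝ | ∃ (g₁ : X →L[ℝ] ℝ) (g₂ : Y →L[ℝ] ℝ),
      (∀ p : E, g p = g₁ ((WithLp.equiv 2 (X × Y) p.val).1) +
        g₂ ((WithLp.equiv 2 (X × Y) p.val).2)) ∧
      r = Real.sqrt (‖g₁‖ ^ 2 + ‖g₂‖ ^ 2)} := by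
  refine (IsLeast.csInf_eq ⟨?_, ?_⟩).symm
  · obtain ⟨g₁, g₂, hg, hnorm⟩ := exists_apply_eq_add_sqrt_eq_norm E g
    exact ⟨g₁, g₂, hg, hnorm.symm⟩
  · rintro r ⟨g₁, g₂, hg, rfl⟩
    exact ContinuousLinearMap.norm_le_sqrt_of_apply_eq_add hg

/-- Lemma 2.2, duality relation `(X ∩ Y)' = X' + Y'` for compatible Hilbert spaces:
with `X`, `Y` Hilbert spaces continuously embedded into a common Hilbert space `H`
and `X ∩ Y` (realized as the compatible pairs `{(x, y) : iX x = iY y}` with the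
norm `‖z‖² = ‖z‖²_X + ‖z‖²_Y`) dense in both `X` and `Y`, every bounded linear
functional `g` on `X ∩ Y` satisfies `‖g‖_{(X∩Y)'} = ‖g‖_{X'+Y'}`, where the sum of
the dual norms is `inf_{g = g₁ + g₂} √(‖g₁‖²_{X'} + ‖g₂‖²_{Y'})`. -/
theorem dual_norm_intersection_eq_sum_dual
    {H X Y : Type*}
    [NormedAddCommGroup H] [InnerProductSpace ℝ H] [CompleteSpace H]
    [NormedAddCommGroup X] [InnerProductSpace ℝ X] [CompleteSpace X]
    [NormedAddCommGroup Y] [InnerProductSpace ℝ Y] [CompleteSpace Y]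
    (iX : X →L[ℝ] H) (iY : Y →L[ℝ] H)
    (hiX : Function.Injective iX) (hiY : Function.Injective iY)
    (E : Submodule ℝ (WithLp 2 (X × Y)))
    (hE : E = LinearMap.ker
      ((iX.toLinearMap.comp (LinearMap.fst ℝ X Y) -
          iY.toLinearMap.comp (LinearMap.snd ℝ X Y)).comp
        (WithLp.linearEquiv 2 ℝ (X × Y)).toLinearMap))
    (hdenseX : DenseRange (fun p : E => (WithLp.equiv 2 (X × Y) p.val).1))
    (hdenseY : DenseRange (fun p : E => (WithLp.equiv 2 (X × Y) p.val).2))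
    (g : E →L[ℝ] ℝ) :
    ‖g‖ = sInf {r : ℝ | ∃ (g₁ : X →L[ℝ] ℝ) (g₂ : Y →L[ℝ] ℝ),
      (∀ p : E, g p = g₁ ((WithLp.equiv 2 (X × Y) p.val).1) +
        g₂ ((WithLp.equiv 2 (X × Y) p.val).2)) ∧
      r = Real.sqrt (‖g₁‖ ^ 2 + ‖g₂‖ ^ 2)} :=
  dual_norm_intersection_eq_sum_dual_general E g
end

section
/- Let M, N be symmetric positive semidefinite m×m real matrices with M positive definite, and let μ, τ > 0. For P ∈ ℝᵐ, the infimum over all decompositions P = P₁ + P₂ of (1/(2μ))⟨M P₁, P₁⟩ + (1/τ)⟨N P₂, P₂⟩ is attained at P₁ = ((τ/(2μ)) M + N)⁻¹ N P, and the infimum value equals (1/(2μ)) ⟨M ((τ/(2μ)) M + N)⁻¹ N P, P⟩. -/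
/-!
With `S = M / (2μ)` and `T = N / τ` the objective is `⟨S Q₁, Q₁⟩ + ⟨T (P - Q₁), P - Q₁⟩`.
Scaling `((τ/(2μ)) M + N) P₁ = N P` by `1/τ` gives the stationarity condition
`S P₁ = T (P - P₁)`, under which moving `P₁` by `d` changes the objective by exactly
`⟨S d, d⟩ + ⟨T d, d⟩ ≥ 0`, and the value at `P₁` collapses to `⟨S P₁, P⟩`.
-/

open Matrix

namespace Matrix

section Symmetric

variable {m R : Type*} [Fintype m] [CommRing R] {S T : Matrix m m R}

lemma IsSymm.mulVec_dotProduct_comm (hS : S.IsSymm) (x y : m → R) :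
    S *ᵥ x ⬝ᵥ y = S *ᵥ y ⬝ᵥ x := by
  rw [dotProduct_comm, dotProduct_mulVec, ← mulVec_transpose, hS.eq, dotProduct_comm]

lemma IsSymm.splitting_add_sub (hS : S.IsSymm) (hT : T.IsSymm) {x y : m → R}
    (hxy : S *ᵥ x = T *ᵥ y) (d : m → R) :
    S *ᵥ (x + d) ⬝ᵥ (x + d) + T *ᵥ (y - d) ⬝ᵥ (y - d) =
      (S *ᵥ x ⬝ᵥ x + T *ᵥ y ⬝ᵥ y) + (S *ᵥ d ⬝ᵥ d + T *ᵥ d ⬝ᵥ d) := by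
  have hS' := hS.mulVec_dotProduct_comm x d
  have hT' := hT.mulVec_dotProduct_comm y d
  simp only [mulVec_add, mulVec_sub, add_dotProduct, sub_dotProduct, dotProduct_add,
    dotProduct_sub, hxy] at hS' ⊢
  linear_combination hT' - hS'

lemma IsSymm.splitting_value (hT : T.IsSymm) {x y : m → R} (hxy : S *ᵥ x = T *ᵥ y) :
    S *ᵥ x ⬝ᵥ x + T *ᵥ y ⬝ᵥ y = S *ᵥ x ⬝ᵥ (x + y) := by
  rw [dotProduct_add, hT.mulVec_dotProduct_comm, ← hxy]

end Symmetric

section Ordered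

variable {m R : Type*} [Fintype m] [CommRing R] [PartialOrder R] [StarRing R] [TrivialStar R]
  {S T : Matrix m m R}

lemma PosSemidef.mulVec_dotProduct_self_nonneg (hS : S.PosSemidef) (x : m → R) :
    0 ≤ S *ᵥ x ⬝ᵥ x := by
  simpa [dotProduct_comm] using hS.dotProduct_mulVec_nonneg x

theorem PosSemidef.isLeast_splitting [IsOrderedRing R] (hS : S.PosSemidef)
    (hT : T.PosSemidef) {x P : m → R} (hx : S *ᵥ x = T *ᵥ (P - x)) :
    IsLeast {r | ∃ Q₁ Q₂ : m → R, P = Q₁ + Q₂ ∧ r = S *ᵥ Q₁ ⬝ᵥ Q₁ + T *ᵥ Q₂ ⬝ᵥ Q₂}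
      (S *ᵥ x ⬝ᵥ P) := by
  have hS' : S.IsSymm := isHermitian_iff_isSymm.mp hS.1
  have hT' : T.IsSymm := isHermitian_iff_isSymm.mp hT.1
  have hvalue := hT'.splitting_value hx
  rw [add_sub_cancel] at hvalue
  refine ⟨⟨x, P - x, (add_sub_cancel x P).symm, hvalue.symm⟩, ?_⟩
  rintro r ⟨Q₁, Q₂, rfl, rfl⟩
  have hsplit := hS'.splitting_add_sub hT' hx (Q₁ - x)
  rw [add_sub_cancel, show Q₁ + Q₂ - x - (Q₁ - x) = Q₂ by abel, hvalue] at hsplit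
  exact hsplit ▸ le_add_of_nonneg_right (add_nonneg (hS.mulVec_dotProduct_self_nonneg _)
    (hT.mulVec_dotProduct_self_nonneg _))

end Ordered

end Matrix

/-- The infimum over decompositions `P = P₁ + P₂` of
`(1/(2μ))⟨M P₁, P₁⟩ + (1/τ)⟨N P₂, P₂⟩` is attained at
`P₁ = ((τ/(2μ)) M + N)⁻¹ N P` with value `(1/(2μ)) ⟨M ((τ/(2μ)) M + N)⁻¹ N P, P⟩`. -/
theorem quadratic_splitting_infimum {m : Type*} [Fintype m] [DecidableEq m]
    (M N : Matrix m m ℝ) (hM : M.PosDef) (hN : N.PosSemidef)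
    (μ τ : ℝ) (hμ : 0 < μ) (hτ : 0 < τ) (P : m → ℝ) :
    let P₁ : m → ℝ := (((τ / (2 * μ)) • M + N)⁻¹ * N).mulVec P
    let v : ℝ := (1 / (2 * μ)) * ((M * ((τ / (2 * μ)) • M + N)⁻¹ * N).mulVec P ⬝ᵥ P)
    IsLeast {r : ℝ | ∃ Q₁ Q₂ : m → ℝ, P = Q₁ + Q₂ ∧
        r = (1 / (2 * μ)) * (M.mulVec Q₁ ⬝ᵥ Q₁) + (1 / τ) * (N.mulVec Q₂ ⬝ᵥ Q₂)} v ∧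
      (1 / (2 * μ)) * (M.mulVec P₁ ⬝ᵥ P₁) +
        (1 / τ) * (N.mulVec (P - P₁) ⬝ᵥ (P - P₁)) = v := by
  intro P₁ v
  have hS : ((1 / (2 * μ)) • M).PosSemidef := hM.posSemidef.smul (by positivity)
  have hT : ((1 / τ) • N).PosSemidef := hN.smul (by positivity)
  have hAP₁ : ((τ / (2 * μ)) • M + N) *ᵥ P₁ = N *ᵥ P := by
    have hA := ((hM.smul (by positivity : 0 < τ / (2 * μ))).add_posSemidef hN).det_pos
    rw [mulVec_mulVec, mul_nonsing_inv_cancel_left _ _ hA.ne'.isUnit]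
  have hstat : ((1 / (2 * μ)) • M) *ᵥ P₁ = ((1 / τ) • N) *ᵥ (P - P₁) := by
    rw [smul_mulVec, smul_mulVec, mulVec_sub, ← hAP₁, add_mulVec, add_sub_cancel_right,
      smul_mulVec, smul_smul]
    congr 1
    field_simp
  have hobj (c d : ℝ) (Q₁ Q₂ : m → ℝ) :
      c * (M *ᵥ Q₁ ⬝ᵥ Q₁) + d * (N *ᵥ Q₂ ⬝ᵥ Q₂) = (c • M) *ᵥ Q₁ ⬝ᵥ Q₁ + (d • N) *ᵥ Q₂ ⬝ᵥ Q₂ := by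
    simp only [smul_mulVec, smul_dotProduct, smul_eq_mul]
  have hv : v = ((1 / (2 * μ)) • M) *ᵥ P₁ ⬝ᵥ P := by
    rw [smul_mulVec, smul_dotProduct, smul_eq_mul, mulVec_mulVec, ← Matrix.mul_assoc]
  simp only [hobj, hv]
  refine ⟨hS.isLeast_splitting hT hstat, ?_⟩
  rw [(isHermitian_iff_isSymm.mp hT.1).splitting_value hstat, add_sub_cancel]
end

section
/- Let M, N be symmetric m×m real matrices with M positive definite and N positive semidefinite, and let λ, μ, τ > 0. Define the quadratic functional |P|²_* = (1/λ)⟨M P, P⟩ + inf_{P = P₁ + P₂} ( (1/(2μ))⟨M P₁, P₁⟩ + (1/τ)⟨N P₂, P₂⟩ ). Then |P|²_* = ⟨S̃ P, P⟩ for all P, where S̃ = (1/λ) M + M (τ M + 2μ N)⁻¹ N. -/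
/-!
The infimum is an infimal convolution of the quadratic forms of `A = M / (2μ)` and `B = N / τ`.
Its minimiser splits `P` as `x₀ = (A + B)⁻¹ B P`, `y₀ = (A + B)⁻¹ A P`, which balances the two
gradients: `A x₀ = B y₀`, because `A (A + B)⁻¹ B = B (A + B)⁻¹ A`. Moving away from the split by `d`
then costs exactly `⟨A d, d⟩ + ⟨B d, d⟩ ≥ 0`, and the minimum is `⟨A (A + B)⁻¹ B P, P⟩`, which
after rescaling is `⟨M (τ M + 2μ N)⁻¹ N P, P⟩`.
-/

open Matrix

namespace Matrix

variable {m : Type*} [Fintype m]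

lemma IsSymm.mulVec_dotProduct_comm_s13 {R : Type*} [CommSemiring R] {Q : Matrix m m R}
    (hQ : Q.IsSymm) (u v : m → R) : Q *ᵥ u ⬝ᵥ v = Q *ᵥ v ⬝ᵥ u := by
  rw [dotProduct_comm (Q *ᵥ u), dotProduct_mulVec, ← mulVec_transpose, hQ.eq]

lemma IsSymm.mulVec_add_dotProduct_add {R : Type*} [CommRing R] {Q : Matrix m m R}
    (hQ : Q.IsSymm) (u d : m → R) :
    Q *ᵥ (u + d) ⬝ᵥ (u + d) = Q *ᵥ u ⬝ᵥ u + 2 * (Q *ᵥ u ⬝ᵥ d) + Q *ᵥ d ⬝ᵥ d := by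
  rw [mulVec_add, add_dotProduct, dotProduct_add, dotProduct_add, hQ.mulVec_dotProduct_comm_s13 d u]
  ring

variable [DecidableEq m]

lemma mul_nonsing_inv_add_mul_comm {R : Type*} [CommRing R] (A B : Matrix m m R)
    (h : IsUnit (A + B).det) : A * (A + B)⁻¹ * B = B * (A + B)⁻¹ * A := by
  have hright : A * (A + B)⁻¹ = 1 - B * (A + B)⁻¹ := by
    rw [eq_sub_iff_add_eq, ← add_mul, mul_nonsing_inv _ h]
  have hleft : (A + B)⁻¹ * A = 1 - (A + B)⁻¹ * B := by
    rw [eq_sub_iff_add_eq, ← mul_add, nonsing_inv_mul _ h]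
  rw [hright, Matrix.mul_assoc B, hleft, sub_mul, mul_sub, Matrix.one_mul, Matrix.mul_one,
    Matrix.mul_assoc]

theorem isLeast_quadForm_infConv {A B : Matrix m m ℝ} (hA : A.PosSemidef) (hB : B.PosSemidef)
    (hAB : IsUnit (A + B).det) (P : m → ℝ) :
    IsLeast {r | ∃ x y : m → ℝ, P = x + y ∧ r = A *ᵥ x ⬝ᵥ x + B *ᵥ y ⬝ᵥ y}
      ((A * (A + B)⁻¹ * B) *ᵥ P ⬝ᵥ P) := by
  have hAs : A.IsSymm := isHermitian_iff_isSymm.mp hA.isHermitian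
  have hBs : B.IsSymm := isHermitian_iff_isSymm.mp hB.isHermitian
  set x₀ := (A + B)⁻¹ *ᵥ (B *ᵥ P)
  set y₀ := (A + B)⁻¹ *ᵥ (A *ᵥ P)
  have hsplit : x₀ + y₀ = P := by
    rw [← mulVec_add, ← add_mulVec, add_comm B, mulVec_mulVec, nonsing_inv_mul _ hAB, one_mulVec]
  have hAx₀ : A *ᵥ x₀ = (A * (A + B)⁻¹ * B) *ᵥ P := by simp only [x₀, mulVec_mulVec, Matrix.mul_assoc]
  have hbalance : A *ᵥ x₀ = B *ᵥ y₀ := by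
    rw [hAx₀, mul_nonsing_inv_add_mul_comm A B hAB]
    simp only [y₀, mulVec_mulVec, Matrix.mul_assoc]
  have hmin : A *ᵥ x₀ ⬝ᵥ x₀ + B *ᵥ y₀ ⬝ᵥ y₀ = (A * (A + B)⁻¹ * B) *ᵥ P ⬝ᵥ P := by
    rw [← hbalance, ← dotProduct_add, hsplit, hAx₀]
  have hshift : ∀ d, A *ᵥ (x₀ + d) ⬝ᵥ (x₀ + d) + B *ᵥ (y₀ - d) ⬝ᵥ (y₀ - d) =
      (A * (A + B)⁻¹ * B) *ᵥ P ⬝ᵥ P + (A *ᵥ d ⬝ᵥ d + B *ᵥ d ⬝ᵥ d) := by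
    intro d
    rw [sub_eq_add_neg, hAs.mulVec_add_dotProduct_add, hBs.mulVec_add_dotProduct_add, ← hmin,
      hbalance, mulVec_neg, neg_dotProduct, dotProduct_neg, dotProduct_neg, neg_neg]
    ring
  refine ⟨⟨x₀, y₀, hsplit.symm, hmin.symm⟩, ?_⟩
  rintro r ⟨x, y, hP, rfl⟩
  obtain ⟨d, rfl⟩ : ∃ d, x = x₀ + d := ⟨x - x₀, by abel⟩
  obtain rfl : y = y₀ - d := by linear_combination -hP - hsplit
  rw [hshift]
  have hAd := hA.dotProduct_mulVec_nonneg d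
  have hBd := hB.dotProduct_mulVec_nonneg d
  rw [star_trivial, dotProduct_comm] at hAd hBd
  linarith

lemma smul_mul_inv_smul_add_smul_mul_smul {K : Type*} [Field K] {a b : K} (ha : a ≠ 0)
    (hb : b ≠ 0) (M N : Matrix m m K) (h : IsUnit (b⁻¹ • M + a⁻¹ • N).det) :
    a • M * (a • M + b • N)⁻¹ * (b • N) = M * (b⁻¹ • M + a⁻¹ • N)⁻¹ * N := by
  have hsum : a • M + b • N = (a * b) • (b⁻¹ • M + a⁻¹ • N) := by
    rw [smul_add, smul_smul, smul_smul]
    congr 2 <;> field_simp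
  have : Invertible (a * b) := invertibleOfNonzero (mul_ne_zero ha hb)
  rw [hsum, inv_smul _ (a * b) h, invOf_eq_inv]
  simp only [Matrix.smul_mul, Matrix.mul_smul, smul_smul]
  rw [show b * ((a * b)⁻¹ * a) = 1 by field_simp, one_smul]

end Matrix

theorem star_norm_eq_schur_preconditioner_general {m : Type*} [Fintype m] [DecidableEq m]
    (M N : Matrix m m ℝ) (hM : M.PosDef) (hN : N.PosSemidef)
    (lam μ τ : ℝ) (hμ : 0 < μ) (hτ : 0 < τ) (P : m → ℝ) :
    (1 / lam) * (M.mulVec P ⬝ᵥ P) +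
        sInf {r : ℝ | ∃ P₁ P₂ : m → ℝ, P = P₁ + P₂ ∧
          r = (1 / (2 * μ)) * (M.mulVec P₁ ⬝ᵥ P₁) + (1 / τ) * (N.mulVec P₂ ⬝ᵥ P₂)} =
      ((1 / lam) • M + M * (τ • M + (2 * μ) • N)⁻¹ * N).mulVec P ⬝ᵥ P := by
  have ha : 0 < 1 / (2 * μ) := by positivity
  have hb : 0 < 1 / τ := by positivity
  have hweighted : ((1 / (2 * μ)) • M + (1 / τ) • N).PosDef :=
    (hM.smul ha).add_posSemidef (hN.smul hb.le)
  have hrescaled : (τ • M + (2 * μ) • N).PosDef :=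
    (hM.smul hτ).add_posSemidef (hN.smul (by positivity))
  have hleast := isLeast_quadForm_infConv (hM.posSemidef.smul ha.le) (hN.smul hb.le)
    ((isUnit_iff_isUnit_det _).mp hweighted.isUnit) P
  have hschur := smul_mul_inv_smul_add_smul_mul_smul ha.ne' hb.ne' M N
    (by simpa only [one_div, inv_inv] using (isUnit_iff_isUnit_det _).mp hrescaled.isUnit)
  simp only [one_div, inv_inv] at hschur
  simp only [smul_mulVec, smul_dotProduct, smul_eq_mul, one_div, hschur] at hleast
  rw [one_div, one_div, one_div, hleast.csInf_eq, add_mulVec, add_dotProduct, smul_mulVec,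
    smul_dotProduct, smul_eq_mul]

/-- Theorem 3.9: the parameter-dependent norm
`|P|²_* = (1/λ)⟨M P, P⟩ + inf_{P = P₁+P₂} ((1/(2μ))⟨M P₁, P₁⟩ + (1/τ)⟨N P₂, P₂⟩)`
equals `⟨S̃ P, P⟩` with `S̃ = (1/λ) M + M (τ M + 2μ N)⁻¹ N`. -/
theorem star_norm_eq_schur_preconditioner {m : Type*} [Fintype m] [DecidableEq m]
    (M N : Matrix m m ℝ) (hM : M.PosDef) (hN : N.PosSemidef)
    (lam μ τ : ℝ) (hlam : 0 < lam) (hμ : 0 < μ) (hτ : 0 < τ) (P : m → ℝ) :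
    (1 / lam) * (M.mulVec P ⬝ᵥ P) +
        sInf {r : ℝ | ∃ P₁ P₂ : m → ℝ, P = P₁ + P₂ ∧
          r = (1 / (2 * μ)) * (M.mulVec P₁ ⬝ᵥ P₁) + (1 / τ) * (N.mulVec P₂ ⬝ᵥ P₂)} =
      ((1 / lam) • M + M * (τ • M + (2 * μ) • N)⁻¹ * N).mulVec P ⬝ᵥ P :=
  star_norm_eq_schur_preconditioner_general M N hM hN lam μ τ hμ hτ P
end

section
/- Let A be symmetric positive definite n×n, and suppose preconditioners R (symmetric positive semidefinite) and a map Π: ℝᵐ → ℝⁿ with auxiliary SPD matrix A₀ (m×m) satisfy: (i) ⟨A Π u₀, Π u₀⟩ ≤ c_Π ⟨A₀ u₀, u₀⟩ for all u₀; (ii) for every u ∈ ℝⁿ there exist u₀ ∈ ℝᵐ and decomposition u = w + Π u₀ with ⟨R⁻¹ w, w⟩ + ⟨A₀ u₀, u₀⟩ ≤ c_s ⟨A u, u⟩ (where R is SPD); (iii) ⟨A v, v⟩ ≤ c_R ⟨R⁻¹ v, v⟩ for all v. Then the additive preconditioner B = R + Π A₀⁻¹ Πᵀ satisfies spectral bounds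 c_s⁻¹ ⟨A u, u⟩ ≤ ⟨(B A) u, u⟩_A ≤ (c_R + c_Π) ⟨A u, u⟩ in the sense that the eigenvalues of B A lie in [1/c_s, c_R + c_Π], hence κ(B A) ≤ c_s (c_R + c_Π). -/
/-! For an eigenpair `(B A) v = t v` put `u = A v`, so that `⟨B u, u⟩ = t ⟨A v, v⟩`, and read
`B = 1 (R⁻¹)⁻¹ 1ᵀ + Π A₀⁻¹ Πᵀ` as an additive Schwarz operator over two spaces. For each space,
Cauchy–Schwarz in the `A`-inner product turns `Pᵀ A P ≤ c C` into the dual bound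
`⟨C⁻¹ Pᵀ u, Pᵀ u⟩ ≤ c ⟨A v, v⟩`; summing gives `t ≤ c_R + c_Π`. For the other side, split
`⟨A v, v⟩ = ⟨u, w⟩ + ⟨u, Π u₀⟩` along the stable decomposition and apply Cauchy–Schwarz in the
`R⁻¹`- and `A₀`-inner products: `⟨A v, v⟩² ≤ ⟨B u, u⟩ · c_s ⟨A v, v⟩`, i.e. `1 ≤ c_s t`. -/

open Matrix

section OrderedRing

variable {α : Type*} [CommRing α] [LinearOrder α] [IsStrictOrderedRing α]

theorem le_of_sq_le_mul {a b : α} (hb : 0 ≤ b) (h : a ^ 2 ≤ b * a) : a ≤ b := by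
  rcases le_or_gt a 0 with ha | ha
  · exact ha.trans hb
  · exact le_of_mul_le_mul_right (by rwa [← sq]) ha

theorem add_sq_le_add_mul_add_of_sq_le_mul {a₁ a₂ p₁ p₂ q₁ q₂ : α} (hp₁ : 0 ≤ p₁) (hp₂ : 0 ≤ p₂)
    (hq₁ : 0 ≤ q₁) (hq₂ : 0 ≤ q₂) (h₁ : a₁ ^ 2 ≤ p₁ * q₁) (h₂ : a₂ ^ 2 ≤ p₂ * q₂) :
    (a₁ + a₂) ^ 2 ≤ (p₁ + p₂) * (q₁ + q₂) := by
  have hcross : 2 * (a₁ * a₂) ≤ p₁ * q₂ + p₂ * q₁ := by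
    refine le_of_abs_le (abs_le_of_sq_le_sq ?_ (by positivity))
    calc (2 * (a₁ * a₂)) ^ 2 = 4 * (a₁ ^ 2 * a₂ ^ 2) := by ring
      _ ≤ 4 * ((p₁ * q₁) * (p₂ * q₂)) := by gcongr
      _ ≤ (p₁ * q₂ + p₂ * q₁) ^ 2 := by nlinarith [sq_nonneg (p₁ * q₂ - p₂ * q₁)]
  linear_combination h₁ + h₂ + hcross

end OrderedRing

namespace Matrix

variable {n m m₁ m₂ : Type*} [Fintype n] [Fintype m] [Fintype m₁] [Fintype m₂]

theorem PosSemidef.mulVec_dotProduct_self_nonneg_s18 {M : Matrix n n ℝ} (hM : M.PosSemidef)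
    (x : n → ℝ) : 0 ≤ M *ᵥ x ⬝ᵥ x := by
  simpa [dotProduct_comm] using hM.dotProduct_mulVec_nonneg x

theorem PosSemidef.mulVec_dotProduct_sq_le {M : Matrix n n ℝ} (hM : M.PosSemidef) (x y : n → ℝ) :
    (M *ᵥ x ⬝ᵥ y) ^ 2 ≤ (M *ᵥ x ⬝ᵥ x) * (M *ᵥ y ⬝ᵥ y) := by
  classical
  have hsymm : (toBilin' M).IsSymm :=
    isSymm_toBilin'_iff_isSymm.mpr (by simpa [IsSymm] using hM.1.eq)
  have h := (toBilin' M).apply_sq_le_of_symm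
    (fun x => by simpa [toBilin'_apply'] using hM.dotProduct_mulVec_nonneg x)
    (LinearMap.BilinForm.isSymm_iff.mp hsymm) y x
  rwa [toBilin'_apply', toBilin'_apply', toBilin'_apply', mul_comm, dotProduct_comm y,
    dotProduct_comm x, dotProduct_comm y] at h

theorem transpose_mulVec_dotProduct (P : Matrix n m ℝ) (u : n → ℝ) (y : m → ℝ) :
    Pᵀ *ᵥ u ⬝ᵥ y = u ⬝ᵥ P *ᵥ y := by
  rw [mulVec_transpose, dotProduct_mulVec]

theorem mul_inv_mul_transpose_mulVec_dotProduct [DecidableEq m] (P : Matrix n m ℝ)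
    (C : Matrix m m ℝ) (u : n → ℝ) :
    (P * C⁻¹ * Pᵀ) *ᵥ u ⬝ᵥ u = C⁻¹ *ᵥ (Pᵀ *ᵥ u) ⬝ᵥ Pᵀ *ᵥ u := by
  rw [← mulVec_mulVec, ← mulVec_mulVec, dotProduct_comm, ← transpose_mulVec_dotProduct,
    dotProduct_comm]

section PosDef

variable [DecidableEq m] {C : Matrix m m ℝ}

theorem PosDef.mulVec_inv_mulVec (hC : C.PosDef) (x : m → ℝ) : C *ᵥ (C⁻¹ *ᵥ x) = x := by
  rw [mulVec_mulVec, mul_nonsing_inv _ ((isUnit_iff_isUnit_det C).mp hC.isUnit), one_mulVec]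

theorem PosDef.dotProduct_mulVec_sq_le (hC : C.PosDef) (P : Matrix n m ℝ) (u : n → ℝ)
    (y : m → ℝ) :
    (u ⬝ᵥ P *ᵥ y) ^ 2 ≤ (C⁻¹ *ᵥ (Pᵀ *ᵥ u) ⬝ᵥ Pᵀ *ᵥ u) * (C *ᵥ y ⬝ᵥ y) := by
  have h := hC.posSemidef.mulVec_dotProduct_sq_le (C⁻¹ *ᵥ (Pᵀ *ᵥ u)) y
  rwa [hC.mulVec_inv_mulVec, transpose_mulVec_dotProduct, dotProduct_comm (Pᵀ *ᵥ u)] at h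

theorem PosDef.inv_mulVec_dotProduct_le {A : Matrix n n ℝ} (hA : A.PosSemidef) (hC : C.PosDef)
    (P : Matrix n m ℝ) {c : ℝ} (hc : 0 ≤ c)
    (h : ∀ z, A *ᵥ (P *ᵥ z) ⬝ᵥ P *ᵥ z ≤ c * (C *ᵥ z ⬝ᵥ z)) (v : n → ℝ) :
    C⁻¹ *ᵥ (Pᵀ *ᵥ (A *ᵥ v)) ⬝ᵥ Pᵀ *ᵥ (A *ᵥ v) ≤ c * (A *ᵥ v ⬝ᵥ v) := by
  set z := C⁻¹ *ᵥ (Pᵀ *ᵥ (A *ᵥ v))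
  have hq : z ⬝ᵥ Pᵀ *ᵥ (A *ᵥ v) = A *ᵥ v ⬝ᵥ P *ᵥ z := by
    rw [dotProduct_comm, transpose_mulVec_dotProduct]
  have hCz : C *ᵥ z ⬝ᵥ z = z ⬝ᵥ Pᵀ *ᵥ (A *ᵥ v) := by
    rw [hC.mulVec_inv_mulVec, dotProduct_comm]
  refine le_of_sq_le_mul (mul_nonneg hc (hA.mulVec_dotProduct_self_nonneg_s18 v)) ?_
  calc (z ⬝ᵥ Pᵀ *ᵥ (A *ᵥ v)) ^ 2
      ≤ (A *ᵥ v ⬝ᵥ v) * (A *ᵥ (P *ᵥ z) ⬝ᵥ P *ᵥ z) := by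
        rw [hq]; exact hA.mulVec_dotProduct_sq_le v (P *ᵥ z)
    _ ≤ (A *ᵥ v ⬝ᵥ v) * (c * (C *ᵥ z ⬝ᵥ z)) :=
        mul_le_mul_of_nonneg_left (h z) (hA.mulVec_dotProduct_self_nonneg_s18 v)
    _ = c * (A *ᵥ v ⬝ᵥ v) * (z ⬝ᵥ Pᵀ *ᵥ (A *ᵥ v)) := by rw [hCz]; ring

end PosDef

theorem PosDef.eigenvalue_bounds {A B : Matrix n n ℝ} (hA : A.PosDef) {c d : ℝ} (hc : 0 < c)
    (hlower : ∀ v, A *ᵥ v ⬝ᵥ v ≤ c * (B *ᵥ (A *ᵥ v) ⬝ᵥ A *ᵥ v))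
    (hupper : ∀ v, B *ᵥ (A *ᵥ v) ⬝ᵥ A *ᵥ v ≤ d * (A *ᵥ v ⬝ᵥ v))
    {t : ℝ} {v : n → ℝ} (hv : v ≠ 0) (ht : (B * A) *ᵥ v = t • v) : 1 / c ≤ t ∧ t ≤ d := by
  have hs : 0 < A *ᵥ v ⬝ᵥ v := by simpa [dotProduct_comm] using hA.dotProduct_mulVec_pos hv
  have hE : B *ᵥ (A *ᵥ v) ⬝ᵥ A *ᵥ v = t * (A *ᵥ v ⬝ᵥ v) := by
    rw [mulVec_mulVec, ht, smul_dotProduct, smul_eq_mul, dotProduct_comm v]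
  have hlo := hlower v
  have hhi := hupper v
  rw [hE] at hlo hhi
  refine ⟨?_, le_of_mul_le_mul_right hhi hs⟩
  rw [div_le_iff₀ hc, mul_comm]
  exact le_of_mul_le_mul_right (by linarith) hs

section AdditiveSchwarz

variable [DecidableEq m₁] [DecidableEq m₂]

noncomputable def additiveSchwarz (P₁ : Matrix n m₁ ℝ) (C₁ : Matrix m₁ m₁ ℝ) (P₂ : Matrix n m₂ ℝ)
    (C₂ : Matrix m₂ m₂ ℝ) : Matrix n n ℝ :=
  P₁ * C₁⁻¹ * P₁ᵀ + P₂ * C₂⁻¹ * P₂ᵀ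

variable {P₁ : Matrix n m₁ ℝ} {C₁ : Matrix m₁ m₁ ℝ} {P₂ : Matrix n m₂ ℝ} {C₂ : Matrix m₂ m₂ ℝ}

theorem additiveSchwarz_mulVec_dotProduct (u : n → ℝ) :
    additiveSchwarz P₁ C₁ P₂ C₂ *ᵥ u ⬝ᵥ u =
      C₁⁻¹ *ᵥ (P₁ᵀ *ᵥ u) ⬝ᵥ P₁ᵀ *ᵥ u + C₂⁻¹ *ᵥ (P₂ᵀ *ᵥ u) ⬝ᵥ P₂ᵀ *ᵥ u := by
  rw [additiveSchwarz, add_mulVec, add_dotProduct, mul_inv_mul_transpose_mulVec_dotProduct,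
    mul_inv_mul_transpose_mulVec_dotProduct]

theorem additiveSchwarz_mulVec_dotProduct_le {A : Matrix n n ℝ} (hA : A.PosSemidef)
    (hC₁ : C₁.PosDef) (hC₂ : C₂.PosDef) {c₁ c₂ : ℝ} (hc₁ : 0 ≤ c₁) (hc₂ : 0 ≤ c₂)
    (h₁ : ∀ z, A *ᵥ (P₁ *ᵥ z) ⬝ᵥ P₁ *ᵥ z ≤ c₁ * (C₁ *ᵥ z ⬝ᵥ z))
    (h₂ : ∀ z, A *ᵥ (P₂ *ᵥ z) ⬝ᵥ P₂ *ᵥ z ≤ c₂ * (C₂ *ᵥ z ⬝ᵥ z)) (v : n → ℝ) :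
    additiveSchwarz P₁ C₁ P₂ C₂ *ᵥ (A *ᵥ v) ⬝ᵥ A *ᵥ v ≤ (c₁ + c₂) * (A *ᵥ v ⬝ᵥ v) := by
  rw [additiveSchwarz_mulVec_dotProduct, add_mul]
  exact add_le_add (hC₁.inv_mulVec_dotProduct_le hA P₁ hc₁ h₁ v)
    (hC₂.inv_mulVec_dotProduct_le hA P₂ hc₂ h₂ v)

theorem mulVec_dotProduct_le_additiveSchwarz (A : Matrix n n ℝ) (hC₁ : C₁.PosDef)
    (hC₂ : C₂.PosDef) {c : ℝ} (hc : 0 ≤ c) {v : n → ℝ} {y₁ : m₁ → ℝ} {y₂ : m₂ → ℝ}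
    (hv : v = P₁ *ᵥ y₁ + P₂ *ᵥ y₂) (h : C₁ *ᵥ y₁ ⬝ᵥ y₁ + C₂ *ᵥ y₂ ⬝ᵥ y₂ ≤ c * (A *ᵥ v ⬝ᵥ v)) :
    A *ᵥ v ⬝ᵥ v ≤ c * (additiveSchwarz P₁ C₁ P₂ C₂ *ᵥ (A *ᵥ v) ⬝ᵥ A *ᵥ v) := by
  set u := A *ᵥ v
  have hsplit : u ⬝ᵥ v = u ⬝ᵥ P₁ *ᵥ y₁ + u ⬝ᵥ P₂ *ᵥ y₂ := by
    conv_lhs => rw [hv]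
    rw [dotProduct_add]
  have hE : 0 ≤ additiveSchwarz P₁ C₁ P₂ C₂ *ᵥ u ⬝ᵥ u := by
    rw [additiveSchwarz_mulVec_dotProduct]
    exact add_nonneg (hC₁.inv.posSemidef.mulVec_dotProduct_self_nonneg_s18 _)
      (hC₂.inv.posSemidef.mulVec_dotProduct_self_nonneg_s18 _)
  refine le_of_sq_le_mul (mul_nonneg hc hE) ?_
  calc (u ⬝ᵥ v) ^ 2
      ≤ additiveSchwarz P₁ C₁ P₂ C₂ *ᵥ u ⬝ᵥ u * (C₁ *ᵥ y₁ ⬝ᵥ y₁ + C₂ *ᵥ y₂ ⬝ᵥ y₂) := by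
        rw [hsplit, additiveSchwarz_mulVec_dotProduct]
        exact add_sq_le_add_mul_add_of_sq_le_mul
          (hC₁.inv.posSemidef.mulVec_dotProduct_self_nonneg_s18 _)
          (hC₂.inv.posSemidef.mulVec_dotProduct_self_nonneg_s18 _)
          (hC₁.posSemidef.mulVec_dotProduct_self_nonneg_s18 _)
          (hC₂.posSemidef.mulVec_dotProduct_self_nonneg_s18 _)
          (hC₁.dotProduct_mulVec_sq_le P₁ u y₁) (hC₂.dotProduct_mulVec_sq_le P₂ u y₂)
    _ ≤ additiveSchwarz P₁ C₁ P₂ C₂ *ᵥ u ⬝ᵥ u * (c * (u ⬝ᵥ v)) :=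
        mul_le_mul_of_nonneg_left h hE
    _ = c * (additiveSchwarz P₁ C₁ P₂ C₂ *ᵥ u ⬝ᵥ u) * (u ⬝ᵥ v) := by ring

end AdditiveSchwarz

end Matrix

/-- Finite-dimensional auxiliary space lemma (Xu 1996, underlying Theorem 3.1):
under the transfer-operator boundedness (i), stable decomposition (ii) and
smoother bound (iii), the additive preconditioner `B = R + Π A₀⁻¹ Πᵀ` satisfies
the spectral bounds: every eigenvalue of `B A` lies in `[1/c_s, c_R + c_Π]`,
hence the ratio of any two eigenvalues, in particular `κ(B A)`, is at most
`c_s (c_R + c_Π)`. -/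
theorem auxiliary_space_preconditioner_bounds
    {n m : Type*} [Fintype n] [Fintype m] [DecidableEq n] [DecidableEq m]
    (A R : Matrix n n ℝ) (hA : A.PosDef) (hR : R.PosDef)
    (A₀ : Matrix m m ℝ) (hA₀ : A₀.PosDef)
    (Pi : Matrix n m ℝ)
    (cPi cs cR : ℝ) (hcPi : 0 < cPi) (hcs : 0 < cs) (hcR : 0 < cR)
    (hi : ∀ u₀ : m → ℝ,
      A.mulVec (Pi.mulVec u₀) ⬝ᵥ Pi.mulVec u₀ ≤ cPi * (A₀.mulVec u₀ ⬝ᵥ u₀))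
    (hii : ∀ u : n → ℝ, ∃ (w : n → ℝ) (u₀ : m → ℝ), u = w + Pi.mulVec u₀ ∧
      (R⁻¹.mulVec w ⬝ᵥ w) + (A₀.mulVec u₀ ⬝ᵥ u₀) ≤ cs * (A.mulVec u ⬝ᵥ u))
    (hiii : ∀ v : n → ℝ, A.mulVec v ⬝ᵥ v ≤ cR * (R⁻¹.mulVec v ⬝ᵥ v)) :
    let B := R + Pi * A₀⁻¹ * Piᵀ
    (∀ (t : ℝ) (v : n → ℝ), v ≠ 0 → (B * A).mulVec v = t • v →
        1 / cs ≤ t ∧ t ≤ cR + cPi) ∧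
      (∀ (t t' : ℝ) (v v' : n → ℝ), v ≠ 0 → v' ≠ 0 →
        (B * A).mulVec v = t • v → (B * A).mulVec v' = t' • v' →
        t / t' ≤ cs * (cR + cPi)) := by
  intro B
  have hB : B = additiveSchwarz 1 R⁻¹ Pi A₀ := by
    simp [B, additiveSchwarz, nonsing_inv_nonsing_inv _ ((isUnit_iff_isUnit_det R).mp hR.isUnit)]
  have hupper (v : n → ℝ) : B *ᵥ (A *ᵥ v) ⬝ᵥ A *ᵥ v ≤ (cR + cPi) * (A *ᵥ v ⬝ᵥ v) := by
    rw [hB]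
    exact additiveSchwarz_mulVec_dotProduct_le hA.posSemidef hR.inv hA₀ hcR.le hcPi.le
      (by simpa using hiii) hi v
  have hlower (v : n → ℝ) : A *ᵥ v ⬝ᵥ v ≤ cs * (B *ᵥ (A *ᵥ v) ⬝ᵥ A *ᵥ v) := by
    obtain ⟨w, u₀, hv, hstab⟩ := hii v
    rw [hB]
    exact mulVec_dotProduct_le_additiveSchwarz A hR.inv hA₀ hcs.le (y₁ := w)
      (by simpa using hv) hstab
  have heig (t : ℝ) (v : n → ℝ) (hv : v ≠ 0) (ht : (B * A) *ᵥ v = t • v) :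
      1 / cs ≤ t ∧ t ≤ cR + cPi :=
    hA.eigenvalue_bounds hcs hlower hupper hv ht
  refine ⟨heig, fun t t' v v' hv hv' ht ht' => ?_⟩
  obtain ⟨hlo, hhi⟩ := heig t v hv ht
  obtain ⟨hlo', -⟩ := heig t' v' hv' ht'
  calc t / t' ≤ (cR + cPi) / (1 / cs) :=
        div_le_div₀ (by linarith [one_div_pos.mpr hcs]) hhi (one_div_pos.mpr hcs) hlo'
    _ = cs * (cR + cPi) := by field_simp
end
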